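/- Let E ≥ 2 be an integer, γ ≥ 0, and a_k ≥ 0 satisfy a_0 = 0 and a_k ≤ (1 + 1/E)a_{k−1} + γ. Then ∑_{k=0}^{E−1} a_k ≤ E^2·((1 + 1/E)^E − 2)·γ ≤ (e − 2)·E^2·γ, where e is Euler's number. -/

import Mathlib

/-! Unrolling the recursion with `q = 1 + 1/E` gives `a k ≤ γ ∑_{i<k} q^i = E (q^k - 1) γ`;
summing these geometric sums over `k < E` gives `E² (q^E - 2) γ`, and `q^E ≤ e`. -/

open Finset

theorem le_geom_sum_mul_of_le_mul_add {R : Type*} [Semiring R] [PartialOrder R] [IsOrderedRing R]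
    {a : ℕ → R} {q γ : R} (hq : 0 ≤ q) (ha0 : a 0 = 0) (hrec : ∀ k, a (k + 1) ≤ q * a k + γ)
    (k : ℕ) : a k ≤ (∑ i ∈ range k, q ^ i) * γ := by
  induction k with
  | zero => simp [ha0]
  | succ k ih =>
    calc a (k + 1) ≤ q * a k + γ := hrec k
      _ ≤ q * ((∑ i ∈ range k, q ^ i) * γ) + γ := by gcongr
      _ = (∑ i ∈ range (k + 1), q ^ i) * γ := by rw [geom_sum_succ, add_mul, mul_assoc, one_mul]

theorem sum_range_geom_sum_one_add_inv (n : ℕ) :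
    ∑ k ∈ range n, ∑ i ∈ range k, (1 + 1 / (n : ℝ)) ^ i = n ^ 2 * ((1 + 1 / (n : ℝ)) ^ n - 2) := by
  rcases eq_or_ne n 0 with rfl | hn
  · simp
  have hq : 1 + 1 / (n : ℝ) ≠ 1 := by simp [hn]
  have hgeom (k : ℕ) : ∑ i ∈ range k, (1 + 1 / (n : ℝ)) ^ i = n * ((1 + 1 / (n : ℝ)) ^ k - 1) := by
    rw [geom_sum_eq hq]
    field_simp
    ring
  simp only [hgeom, ← mul_sum, sum_sub_distrib, sum_const, card_range, nsmul_eq_mul, mul_one]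
  ring

theorem local_drift_sum_bound_general (E : ℕ) (γ : ℝ) (hγ : 0 ≤ γ)
    (a : ℕ → ℝ) (ha0 : a 0 = 0)
    (hrec : ∀ k, 1 ≤ k → a k ≤ (1 + 1 / (E : ℝ)) * a (k - 1) + γ) :
    ∑ k ∈ Finset.range E, a k ≤ (E : ℝ) ^ 2 * ((1 + 1 / (E : ℝ)) ^ E - 2) * γ ∧
    (E : ℝ) ^ 2 * ((1 + 1 / (E : ℝ)) ^ E - 2) * γ ≤ (Real.exp 1 - 2) * (E : ℝ) ^ 2 * γ := by
  have hstep (k : ℕ) : a (k + 1) ≤ (1 + 1 / (E : ℝ)) * a k + γ := hrec (k + 1) (Nat.le_add_left 1 k)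
  have hpoint := le_geom_sum_mul_of_le_mul_add (by positivity) ha0 hstep
  constructor
  · calc ∑ k ∈ range E, a k ≤ ∑ k ∈ range E, (∑ i ∈ range k, (1 + 1 / (E : ℝ)) ^ i) * γ :=
          sum_le_sum fun k _ => hpoint k
      _ = (E : ℝ) ^ 2 * ((1 + 1 / (E : ℝ)) ^ E - 2) * γ := by
          rw [← sum_mul, sum_range_geom_sum_one_add_inv]
  · have hexp : (1 + 1 / (E : ℝ)) ^ E ≤ Real.exp 1 := by
      simpa only [one_div] using Real.one_add_inv_pow_le_exp
    calc (E : ℝ) ^ 2 * ((1 + 1 / (E : ℝ)) ^ E - 2) * γ ≤ (E : ℝ) ^ 2 * (Real.exp 1 - 2) * γ := by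
          gcongr
      _ = (Real.exp 1 - 2) * (E : ℝ) ^ 2 * γ := by ring

theorem local_drift_sum_bound (E : ℕ) (hE : 2 ≤ E) (γ : ℝ) (hγ : 0 ≤ γ)
    (a : ℕ → ℝ) (ha0 : a 0 = 0) (hnn : ∀ k, 0 ≤ a k)
    (hrec : ∀ k, 1 ≤ k → a k ≤ (1 + 1 / (E : ℝ)) * a (k - 1) + γ) :
    ∑ k ∈ Finset.range E, a k ≤ (E : ℝ) ^ 2 * ((1 + 1 / (E : ℝ)) ^ E - 2) * γ ∧
    (E : ℝ) ^ 2 * ((1 + 1 / (E : ℝ)) ^ E - 2) * γ ≤ (Real.exp 1 - 2) * (E : ℝ) ^ 2 * γ :=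
  local_drift_sum_bound_general E γ hγ a ha0 hrec
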